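/- Let R be a commutative ring. For a symmetric 3×3 matrix n over R with diagonal entries α₁, α₂, α₃ and off-diagonal entries β₁, β₂, β₃ (β_i in position (j,k) for {i,j,k} = {1,2,3}), set γ_i = α_j α_k − β_i² and define 𝖷(n) = (α₁α₂α₃)⁴·(γ₁γ₂γ₃)²·det n and 𝖣(n) = α₁α₂α₃·(γ₁γ₂γ₃)²·(det n)⁴. Then for every symmetric 3×3 matrix m over R, 𝖷(Cof m) = 𝖣(m)², where Cof m is the cofactor matrix (transpose of the adjugate) of m. -/

import Mathlib

open Matrix

/-- The cofactor matrix of a `3 × 3` matrix: the transpose of the adjugate. -/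
def Cof {R : Type*} [CommRing R] (m : Matrix (Fin 3) (Fin 3) R) :
    Matrix (Fin 3) (Fin 3) R :=
  (Matrix.adjugate m)ᵀ

/-- For a symmetric `3 × 3` matrix `n` with diagonal `α₁, α₂, α₃` and off-diagonal
`β₁, β₂, β₃` and `γᵢ = αⱼαₖ − βᵢ²`, the quantity `𝖷(n) = (α₁α₂α₃)⁴·(γ₁γ₂γ₃)²·det n`. -/
def XX {R : Type*} [CommRing R] (n : Matrix (Fin 3) (Fin 3) R) : R :=
  (n 0 0 * n 1 1 * n 2 2) ^ 4 *
    ((n 1 1 * n 2 2 - n 1 2 ^ 2) * (n 0 0 * n 2 2 - n 0 2 ^ 2) *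
      (n 0 0 * n 1 1 - n 0 1 ^ 2)) ^ 2 * n.det

/-- `𝖣(n) = α₁α₂α₃·(γ₁γ₂γ₃)²·(det n)⁴`. -/
def DD {R : Type*} [CommRing R] (n : Matrix (Fin 3) (Fin 3) R) : R :=
  (n 0 0 * n 1 1 * n 2 2) *
    ((n 1 1 * n 2 2 - n 1 2 ^ 2) * (n 0 0 * n 2 2 - n 0 2 ^ 2) *
      (n 0 0 * n 1 1 - n 0 1 ^ 2)) ^ 2 * n.det ^ 4

/-!
Both `𝖷` and `𝖣` are monomials in `α₁α₂α₃`, `γ₁γ₂γ₃` and `det`, and for a symmetric matrix the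
`γᵢ` are the diagonal entries of the cofactor matrix. Passing from `m` to `Cof m` therefore sends
`α₁α₂α₃ ↦ γ₁γ₂γ₃`, `γ₁γ₂γ₃ ↦ (det m)³ α₁α₂α₃` (as `Cof (Cof m) = det m • m`) and
`det ↦ det²`, after which both sides equal `(α₁α₂α₃)²(γ₁γ₂γ₃)⁴(det m)⁸`.
-/

namespace Matrix

variable {R : Type*} [CommRing R]

def diagProd (n : Matrix (Fin 3) (Fin 3) R) : R :=
  n 0 0 * n 1 1 * n 2 2

lemma diagProd_smul (c : R) (n : Matrix (Fin 3) (Fin 3) R) :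
    diagProd (c • n) = c ^ 3 * diagProd n := by
  simp only [diagProd, smul_apply, smul_eq_mul]
  ring

lemma isSymm_cof {m : Matrix (Fin 3) (Fin 3) R} (hm : m.IsSymm) : (Cof m).IsSymm := by
  rw [Matrix.IsSymm, Cof, transpose_transpose, adjugate_transpose, hm.eq]

lemma det_cof (m : Matrix (Fin 3) (Fin 3) R) : (Cof m).det = m.det ^ 2 := by
  rw [Cof, det_transpose, det_adjugate, Fintype.card_fin]

lemma cof_cof (m : Matrix (Fin 3) (Fin 3) R) : Cof (Cof m) = m.det • m := by
  rw [Cof, Cof, adjugate_transpose, transpose_transpose, adjugate_adjugate m (by simp),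
    Fintype.card_fin, pow_one]

lemma prod_diag_minors_eq_diagProd_cof {n : Matrix (Fin 3) (Fin 3) R} (hn : n.IsSymm) :
    (n 1 1 * n 2 2 - n 1 2 ^ 2) * (n 0 0 * n 2 2 - n 0 2 ^ 2) * (n 0 0 * n 1 1 - n 0 1 ^ 2) =
      diagProd (Cof n) := by
  simp only [diagProd, Cof, transpose_apply, adjugate_fin_three, of_apply, cons_val', cons_val,
    empty_val', cons_val_fin_one, ← hn.apply 1 2, ← hn.apply 0 2, ← hn.apply 0 1]
  ring

lemma XX_eq_of_isSymm {n : Matrix (Fin 3) (Fin 3) R} (hn : n.IsSymm) :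
    XX n = diagProd n ^ 4 * diagProd (Cof n) ^ 2 * n.det := by
  rw [XX, prod_diag_minors_eq_diagProd_cof hn]
  rfl

lemma DD_eq_of_isSymm {n : Matrix (Fin 3) (Fin 3) R} (hn : n.IsSymm) :
    DD n = diagProd n * diagProd (Cof n) ^ 2 * n.det ^ 4 := by
  rw [DD, prod_diag_minors_eq_diagProd_cof hn]
  rfl

end Matrix

/-- For every symmetric `3 × 3` matrix `m` over a commutative ring,
`𝖷(Cof m) = 𝖣(m)²`. -/
theorem stmt_8 {R : Type*} [CommRing R] (m : Matrix (Fin 3) (Fin 3) R)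
    (hm : m.IsSymm) : XX (Cof m) = (DD m) ^ 2 := by
  rw [XX_eq_of_isSymm (isSymm_cof hm), DD_eq_of_isSymm hm, cof_cof, diagProd_smul, det_cof]
  ring
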